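/- arXiv:math/0411283 — 3 statements merged into one kernel-verified Lean document; each statement's English description precedes it below -/
import Mathlib

section
/- Summation-by-parts bound for the 1D three-point finite volume error equation: let h_{i+1/2} > 0 for i = 0,...,N, α, β ≥ 0, h_i > 0, and let (e_i)_{i=0}^{N+1} with e_0 = e_{N+1} = 0 satisfy -(e_{i+1}-e_i)/h_{i+1/2} + (e_i-e_{i-1})/h_{i-1/2} + α(e_i - e_{i-1}) + β h_i e_i = γ_i - γ_{i-1} + δ_i for i = 1,...,N. Then Σ_{i=0}^{N} (e_{i+1}-e_i)²/h_{i+1/2} ≤ (Σ_{i=0}^{N} h_{i+1/2} γ_i²)^{1/2} (Σ_{i=0}^{N} (e_{i+1}-e_i)²/h_{i+1/2})^{1/2} + |Σ_{i=1}^{N} δ_i e_i|. -/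
open Finset

private lemma abel_sum (f e : ℕ → ℝ) (N : ℕ) :
    ∑ i ∈ Icc 1 N, (f i - f (i - 1)) * e i
      = f N * e (N + 1) - f 0 * e 0
        - ∑ i ∈ range (N + 1), f i * (e (i + 1) - e i) := by
  induction N with
  | zero => simp; ring
  | succ n ih =>
    have h2 : ∑ i ∈ range (n + 1 + 1), f i * (e (i + 1) - e i)
        = (∑ i ∈ range (n + 1), f i * (e (i + 1) - e i))
          + f (n + 1) * (e (n + 2) - e (n + 1)) := Finset.sum_range_succ _ _
    rw [Finset.sum_Icc_succ_top (Nat.le_add_left 1 n), ih, h2, Nat.add_sub_cancel]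
    ring

/-- summation-by-parts bound for the 1D three-point finite volume
error equation. -/
theorem fv_error_sum_by_parts_bound
    (N : ℕ) (α β : ℝ) (hα : 0 ≤ α) (hβ : 0 ≤ β)
    (hhalf hcell : ℕ → ℝ) (e γ δ : ℕ → ℝ)
    (hhalfpos : ∀ i ≤ N, 0 < hhalf i)
    (hcellpos : ∀ i, 1 ≤ i → i ≤ N → 0 < hcell i)
    (e0 : e 0 = 0) (eN : e (N + 1) = 0)
    (heq : ∀ i, 1 ≤ i → i ≤ N →
      -((e (i + 1) - e i) / hhalf i) + (e i - e (i - 1)) / hhalf (i - 1)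
        + α * (e i - e (i - 1)) + β * hcell i * e i
        = γ i - γ (i - 1) + δ i) :
    (∑ i ∈ range (N + 1), (e (i + 1) - e i) ^ 2 / hhalf i) ≤
      Real.sqrt (∑ i ∈ range (N + 1), hhalf i * (γ i) ^ 2) *
        Real.sqrt (∑ i ∈ range (N + 1), (e (i + 1) - e i) ^ 2 / hhalf i)
      + |∑ i ∈ Icc 1 N, δ i * e i| := by
  set S := ∑ i ∈ range (N + 1), (e (i + 1) - e i) ^ 2 / hhalf i with hSdef
  set g : ℕ → ℝ := fun i => (e (i + 1) - e i) / hhalf i with hg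
  -- the summed equation
  have hsum : ∑ i ∈ Icc 1 N,
      (-(g i - g (i - 1)) + α * (e i - e (i - 1)) + β * hcell i * e i) * e i
      = ∑ i ∈ Icc 1 N, (γ i - γ (i - 1) + δ i) * e i := by
    refine sum_congr rfl fun i hi => ?_
    rw [mem_Icc] at hi
    have h1 : i - 1 + 1 = i := by omega
    simp only [hg, h1]
    linear_combination (e i) * heq i hi.1 hi.2
  -- expand the left side
  have expand : ∑ i ∈ Icc 1 N,
      (-(g i - g (i - 1)) + α * (e i - e (i - 1)) + β * hcell i * e i) * e i
      = -∑ i ∈ Icc 1 N, (g i - g (i - 1)) * e i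
        + α * ∑ i ∈ Icc 1 N, (e i - e (i - 1)) * e i
        + β * ∑ i ∈ Icc 1 N, hcell i * e i ^ 2 := by
    rw [Finset.mul_sum, Finset.mul_sum, ← Finset.sum_neg_distrib,
      ← Finset.sum_add_distrib, ← Finset.sum_add_distrib]
    exact sum_congr rfl fun i _ => by ring
  -- diffusion term gives S
  have A1 : ∑ i ∈ Icc 1 N, (g i - g (i - 1)) * e i = -S := by
    rw [abel_sum g e N, eN, e0]
    have h2 : ∑ i ∈ range (N + 1), g i * (e (i + 1) - e i) = S := by
      refine sum_congr rfl fun i _ => ?_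
      simp only [hg]; ring
    rw [h2]; ring
  -- key telescoping identity for e_i * (e_{i+1} - e_i)
  have esum : ∑ i ∈ range (N + 1), e i * (e (i + 1) - e i)
      = (e (N + 1) ^ 2 - e 0 ^ 2) / 2
        - (∑ i ∈ range (N + 1), (e (i + 1) - e i) ^ 2) / 2 := by
    have h1 : ∀ i : ℕ, e i * (e (i + 1) - e i)
        = (e (i + 1) ^ 2 / 2 - e i ^ 2 / 2) - (e (i + 1) - e i) ^ 2 / 2 :=
      fun i => by ring
    simp only [h1]
    rw [Finset.sum_sub_distrib, Finset.sum_range_sub (fun i => e i ^ 2 / 2),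
      ← Finset.sum_div]
    ring
  -- convective term
  have A2 : ∑ i ∈ Icc 1 N, (e i - e (i - 1)) * e i
      = (∑ i ∈ range (N + 1), (e (i + 1) - e i) ^ 2) / 2 := by
    rw [abel_sum e e N, eN, e0, esum, eN, e0]
    ring
  -- right-hand side
  have B : ∑ i ∈ Icc 1 N, (γ i - γ (i - 1) + δ i) * e i
      = -∑ i ∈ range (N + 1), γ i * (e (i + 1) - e i)
        + ∑ i ∈ Icc 1 N, δ i * e i := by
    have h3 : ∀ i : ℕ, (γ i - γ (i - 1) + δ i) * e i
        = (γ i - γ (i - 1)) * e i + δ i * e i := fun i => by ring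
    simp only [h3]
    rw [Finset.sum_add_distrib, abel_sum γ e N, eN, e0]
    ring
  -- combine into the main energy identity
  have key : S + α * ((∑ i ∈ range (N + 1), (e (i + 1) - e i) ^ 2) / 2)
      + β * ∑ i ∈ Icc 1 N, hcell i * e i ^ 2
      = -∑ i ∈ range (N + 1), γ i * (e (i + 1) - e i)
        + ∑ i ∈ Icc 1 N, δ i * e i := by
    rw [← B, ← hsum, expand, A1, A2]; ring
  -- nonnegativity of the dropped terms
  have hnn1 : 0 ≤ α * ((∑ i ∈ range (N + 1), (e (i + 1) - e i) ^ 2) / 2) := by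
    apply mul_nonneg hα
    have : 0 ≤ ∑ i ∈ range (N + 1), (e (i + 1) - e i) ^ 2 :=
      Finset.sum_nonneg fun i _ => sq_nonneg _
    linarith
  have hnn2 : 0 ≤ β * ∑ i ∈ Icc 1 N, hcell i * e i ^ 2 := by
    apply mul_nonneg hβ
    refine Finset.sum_nonneg fun i hi => ?_
    rw [mem_Icc] at hi
    exact mul_nonneg (hcellpos i hi.1 hi.2).le (sq_nonneg _)
  have hSnn : 0 ≤ S := by
    refine Finset.sum_nonneg fun i hi => ?_
    rw [mem_range] at hi
    exact div_nonneg (sq_nonneg _) (hhalfpos i (by omega)).le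
  -- Cauchy–Schwarz
  have CS : (∑ i ∈ range (N + 1), γ i * (e (i + 1) - e i)) ^ 2
      ≤ (∑ i ∈ range (N + 1), hhalf i * (γ i) ^ 2) * S := by
    have h4 : ∀ i ∈ range (N + 1),
        γ i * (e (i + 1) - e i)
          = (Real.sqrt (hhalf i) * γ i) * ((e (i + 1) - e i) / Real.sqrt (hhalf i)) := by
      intro i hi
      rw [mem_range] at hi
      have hpos := hhalfpos i (by omega)
      have hs : Real.sqrt (hhalf i) ≠ 0 := by positivity
      field_simp
    have h5 : ∀ i ∈ range (N + 1),
        (Real.sqrt (hhalf i) * γ i) ^ 2 = hhalf i * (γ i) ^ 2 := by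
      intro i hi
      rw [mem_range] at hi
      have hpos := hhalfpos i (by omega)
      rw [mul_pow, Real.sq_sqrt hpos.le]
    have h6 : ∀ i ∈ range (N + 1),
        ((e (i + 1) - e i) / Real.sqrt (hhalf i)) ^ 2
          = (e (i + 1) - e i) ^ 2 / hhalf i := by
      intro i hi
      rw [mem_range] at hi
      have hpos := hhalfpos i (by omega)
      rw [div_pow, Real.sq_sqrt hpos.le]
    calc (∑ i ∈ range (N + 1), γ i * (e (i + 1) - e i)) ^ 2
        = (∑ i ∈ range (N + 1),
            (Real.sqrt (hhalf i) * γ i) * ((e (i + 1) - e i) / Real.sqrt (hhalf i))) ^ 2 := by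
          rw [sum_congr rfl h4]
      _ ≤ (∑ i ∈ range (N + 1), (Real.sqrt (hhalf i) * γ i) ^ 2)
            * (∑ i ∈ range (N + 1), ((e (i + 1) - e i) / Real.sqrt (hhalf i)) ^ 2) :=
          Finset.sum_mul_sq_le_sq_mul_sq _ _ _
      _ = (∑ i ∈ range (N + 1), hhalf i * (γ i) ^ 2) * S := by
          rw [sum_congr rfl h5, sum_congr rfl h6]
  have hγnn : 0 ≤ ∑ i ∈ range (N + 1), hhalf i * (γ i) ^ 2 := by
    refine Finset.sum_nonneg fun i hi => ?_
    rw [mem_range] at hi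
    exact mul_nonneg (hhalfpos i (by omega)).le (sq_nonneg _)
  have habs : |∑ i ∈ range (N + 1), γ i * (e (i + 1) - e i)|
      ≤ Real.sqrt (∑ i ∈ range (N + 1), hhalf i * (γ i) ^ 2) * Real.sqrt S := by
    rw [← Real.sqrt_sq_eq_abs, ← Real.sqrt_mul hγnn]
    exact Real.sqrt_le_sqrt CS
  have hfin : S ≤ -∑ i ∈ range (N + 1), γ i * (e (i + 1) - e i)
      + ∑ i ∈ Icc 1 N, δ i * e i := by linarith
  calc S ≤ -∑ i ∈ range (N + 1), γ i * (e (i + 1) - e i)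
        + ∑ i ∈ Icc 1 N, δ i * e i := hfin
    _ ≤ |∑ i ∈ range (N + 1), γ i * (e (i + 1) - e i)| + |∑ i ∈ Icc 1 N, δ i * e i| :=
        add_le_add (neg_le_abs _) (le_abs_self _)
    _ ≤ Real.sqrt (∑ i ∈ range (N + 1), hhalf i * (γ i) ^ 2) * Real.sqrt S
        + |∑ i ∈ Icc 1 N, δ i * e i| := add_le_add habs le_rfl
end

section
/- Discrete L² bound for shifted first-derivative error: let u ∈ C²([0,1]) with u(0) = u(1) = 0, let 0 = x_0 < ... < x_{N+1} = 1 with h_{i+1/2} = x_{i+1} − x_i, Σ_{i=0}^{N} h_{i+1/2} = 1, and suppose (u_i)_{i=0}^{N+1} satisfies u_0 = u_{N+1} = 0 and the discrete H¹ error bound (Σ_{i=0}^{N} (e_{i+1}−e_i)²/h_{i+1/2})^{1/2} ≤ C h ‖u''‖_∞, where e_i = u(x_i) − u_i and h = max h_{i+1/2}. Then (Σ_{i=0}^{N} h_{i+1/2} (u_i − u(x_{i+1/2}))²)^{1/2} ≤ c h ‖u''‖_∞ for points x_{i+1/2} ∈ [x_i, x_{i+1}]. -/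
open Set Finset

/-!
The nodal error `e_i = u(x_i) - u_i` vanishes at `x_0`, so Cauchy–Schwarz along the mesh (a discrete
Poincaré inequality, with weights `h_{i+1/2}` summing to `1`) bounds every `|e_i|` by the discrete
`H¹` seminorm of `e`, hence by `C h M`. Since `u(0) = u(1) = 0`, Rolle's theorem gives a zero of `u'`,
so `|u'| ≤ M` and `|u(x_{i+1/2}) - u(x_i)| ≤ M h`. Thus `|u_i - u(x_{i+1/2})| ≤ (C + 1) h M` for every
`i`, and the weighted `L²` norm, whose weights sum to `1`, inherits this bound.
-/

theorem monotoneOn_Iic_of_le_succ {α : Type*} [Preorder α] {x : ℕ → α} {n : ℕ}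
    (hx : ∀ i < n, x i ≤ x (i + 1)) : MonotoneOn x (Set.Iic n) := by
  intro i _ j hj hij
  induction j, hij using Nat.le_induction with
  | base => exact le_rfl
  | succ k _ ih =>
    rw [Set.mem_Iic] at hj
    exact (ih (Set.mem_Iic.2 (by omega))).trans (hx k (by omega))

theorem mem_Icc_of_forall_le_succ {α : Type*} [Preorder α] {x : ℕ → α} {n i : ℕ}
    (hx : ∀ j < n, x j ≤ x (j + 1)) (hi : i ≤ n) : x i ∈ Set.Icc (x 0) (x n) :=
  ⟨monotoneOn_Iic_of_le_succ hx (Set.mem_Iic.2 (Nat.zero_le _)) (Set.mem_Iic.2 hi) (Nat.zero_le i),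
    monotoneOn_Iic_of_le_succ hx (Set.mem_Iic.2 hi) (Set.mem_Iic.2 le_rfl) hi⟩

theorem Convex.abs_image_sub_le_mul_sub_of_abs_deriv_le {D : Set ℝ} (hD : Convex ℝ D)
    {f : ℝ → ℝ} (hf : ContinuousOn f D) (hf' : DifferentiableOn ℝ f (interior D)) {C : ℝ}
    (hC : ∀ x ∈ interior D, |deriv f x| ≤ C) {x y : ℝ} (hx : x ∈ D) (hy : y ∈ D)
    (hxy : x ≤ y) : |f y - f x| ≤ C * (y - x) := by
  have hlower := hD.mul_sub_le_image_sub_of_le_deriv hf hf'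
    (fun z hz => neg_le_of_abs_le (hC z hz)) x hx y hy hxy
  have hupper := hD.image_sub_le_mul_sub_of_deriv_le hf hf'
    (fun z hz => le_of_abs_le (hC z hz)) x hx y hy hxy
  exact abs_le.2 ⟨by linarith, hupper⟩

theorem abs_deriv_le_of_eq_of_abs_iteratedDeriv_two_le {u : ℝ → ℝ} {a b M : ℝ}
    (hu : ContDiffOn ℝ 2 u (Icc a b)) (hab : u a = u b)
    (hM : ∀ y ∈ Ioo a b, |iteratedDeriv 2 u y| ≤ M) {y : ℝ} (hy : y ∈ Ioo a b) :
    |deriv u y| ≤ M * (b - a) := by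
  have hdu : DifferentiableOn ℝ (deriv u) (Ioo a b) :=
    ((contDiffOn_succ_iff_deriv_of_isOpen (n := 1) isOpen_Ioo).1
      (hu.mono Ioo_subset_Icc_self)).2.2.differentiableOn one_ne_zero
  obtain ⟨ξ, hξ, hξ0⟩ := exists_deriv_eq_zero (hy.1.trans hy.2) hu.continuousOn hab
  have hlip := (convex_Ioo a b).norm_image_sub_le_of_norm_deriv_le (f := deriv u)
    (fun z hz => hdu.differentiableAt (isOpen_Ioo.mem_nhds hz))
    (fun z hz => by simpa [iteratedDeriv_succ] using hM z hz) hξ hy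
  rw [hξ0, sub_zero, Real.norm_eq_abs, Real.norm_eq_abs] at hlip
  have hM0 : 0 ≤ M := (abs_nonneg _).trans (hM y hy)
  have hdist : |y - ξ| ≤ b - a := abs_le.2 ⟨by linarith [hy.1, hξ.2], by linarith [hy.2, hξ.1]⟩
  calc |deriv u y| ≤ M * |y - ξ| := hlip
    _ ≤ M * (b - a) := by gcongr

theorem abs_sub_le_of_eq_of_abs_iteratedDeriv_two_le {u : ℝ → ℝ} {a b M : ℝ}
    (hu : ContDiffOn ℝ 2 u (Icc a b)) (hab : u a = u b)
    (hM : ∀ y ∈ Ioo a b, |iteratedDeriv 2 u y| ≤ M) {x y : ℝ} (hx : x ∈ Icc a b)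
    (hy : y ∈ Icc a b) (hxy : x ≤ y) : |u y - u x| ≤ M * (b - a) * (y - x) := by
  refine (convex_Icc a b).abs_image_sub_le_mul_sub_of_abs_deriv_le hu.continuousOn ?_ ?_ hx hy hxy
  · rw [interior_Icc]
    exact (hu.differentiableOn two_ne_zero).mono Ioo_subset_Icc_self
  · rw [interior_Icc]
    exact fun z hz => abs_deriv_le_of_eq_of_abs_iteratedDeriv_two_le hu hab hM hz

theorem abs_sub_le_sqrt_sum_mul_sqrt_sum_sq_div {E d : ℕ → ℝ} {n k : ℕ}
    (hd : ∀ j < n, 0 < d j) (hk : k ≤ n) :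
    |E k - E 0| ≤
      √(∑ j ∈ range n, d j) * √(∑ j ∈ range n, (E (j + 1) - E j) ^ 2 / d j) := by
  have hd' : ∀ j ∈ range n, 0 < d j := fun j hj => hd j (mem_range.1 hj)
  have hcs : (∑ j ∈ range n, |E (j + 1) - E j|) ^ 2 ≤
      (∑ j ∈ range n, d j) * ∑ j ∈ range n, (E (j + 1) - E j) ^ 2 / d j :=
    sum_sq_le_sum_mul_sum_of_sq_le_mul _ (fun j hj => (hd' j hj).le)
      (fun j hj => div_nonneg (sq_nonneg _) (hd' j hj).le)
      fun j hj => by rw [sq_abs, mul_div_cancel₀ _ (hd' j hj).ne']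
  rw [← Real.sqrt_mul (sum_nonneg fun j hj => (hd' j hj).le)]
  calc |E k - E 0| = |∑ j ∈ range k, (E (j + 1) - E j)| := by rw [sum_range_sub]
    _ ≤ ∑ j ∈ range k, |E (j + 1) - E j| := abs_sum_le_sum_abs _ _
    _ ≤ ∑ j ∈ range n, |E (j + 1) - E j| :=
      sum_le_sum_of_subset_of_nonneg (range_subset_range.2 hk) fun _ _ _ => abs_nonneg _
    _ ≤ _ := (le_abs_self _).trans (Real.abs_le_sqrt hcs)

theorem sqrt_sum_mul_sq_le_sqrt_sum_mul {ι : Type*} (s : Finset ι) {w a : ι → ℝ} {K : ℝ}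
    (hw : ∀ i ∈ s, 0 ≤ w i) (ha : ∀ i ∈ s, |a i| ≤ K) (hK : 0 ≤ K) :
    √(∑ i ∈ s, w i * a i ^ 2) ≤ √(∑ i ∈ s, w i) * K := by
  rw [← Real.sqrt_sq hK, ← Real.sqrt_mul (sum_nonneg hw), sum_mul]
  refine Real.sqrt_le_sqrt (sum_le_sum fun i hi => ?_)
  obtain ⟨hlo, hhi⟩ := abs_le.1 (ha i hi)
  exact mul_le_mul_of_nonneg_left (sq_le_sq' hlo hhi) (hw i hi)

/-- discrete L² bound for the shifted first-derivative error:
`(Σ h_{i+1/2} (u_i − u(x_{i+1/2}))²)^{1/2} ≤ c h ‖u''‖_∞`, given the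
standard O(h) discrete H¹₀ error bound with constant `C`. -/
theorem discrete_L2_shifted_value_error (C : ℝ) (hC : 0 < C) :
    ∃ c : ℝ, 0 < c ∧
      ∀ (N : ℕ) (x xhalf : ℕ → ℝ) (uh : ℕ → ℝ) (u : ℝ → ℝ) (h M : ℝ),
        ContDiffOn ℝ 2 u (Icc 0 1) → u 0 = 0 → u 1 = 0 →
        x 0 = 0 → x (N + 1) = 1 →
        (∀ i ≤ N, x i < x (i + 1)) →
        (∀ i ≤ N, xhalf i ∈ Icc (x i) (x (i + 1))) →
        (∀ i ≤ N, x (i + 1) - x i ≤ h) →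
        uh 0 = 0 → uh (N + 1) = 0 →
        (∀ y ∈ Icc (0:ℝ) 1, |iteratedDeriv 2 u y| ≤ M) → 0 ≤ M →
        Real.sqrt (∑ i ∈ range (N + 1),
            ((u (x (i + 1)) - uh (i + 1)) - (u (x i) - uh i)) ^ 2
              / (x (i + 1) - x i)) ≤ C * h * M →
        Real.sqrt (∑ i ∈ range (N + 1),
            (x (i + 1) - x i) * (uh i - u (xhalf i)) ^ 2) ≤ c * h * M := by
  refine ⟨C + 1, by linarith, ?_⟩
  intro N x xhalf uh u h M hu hu0 hu1 hx0 hxN hxlt hxhalf hxh huh0 _ hM hM0 hH1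
  have hstep : ∀ j < N + 1, 0 < x (j + 1) - x j := fun j hj => sub_pos.2 (hxlt j (by omega))
  have hnode : ∀ i ≤ N + 1, x i ∈ Set.Icc 0 1 := fun i hi =>
    hx0 ▸ hxN ▸ mem_Icc_of_forall_le_succ (fun j hj => (sub_pos.1 (hstep j hj)).le) hi
  have hlength : ∑ i ∈ range (N + 1), (x (i + 1) - x i) = 1 := by
    rw [sum_range_sub, hx0, hxN, sub_zero]
  have hnodal : ∀ i ≤ N + 1, |u (x i) - uh i| ≤ C * h * M := fun i hi => by
    have hpoincare :=
      abs_sub_le_sqrt_sum_mul_sqrt_sum_sq_div (E := fun i => u (x i) - uh i) hstep hi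
    rw [hlength, Real.sqrt_one, one_mul] at hpoincare
    simpa only [hx0, hu0, huh0, sub_zero] using hpoincare.trans hH1
  have hpointwise : ∀ i ∈ range (N + 1), |uh i - u (xhalf i)| ≤ (C + 1) * h * M := by
    intro i hi
    have hiN : i ≤ N := Nat.lt_succ_iff.1 (mem_range.1 hi)
    obtain ⟨hleft, hright⟩ := hxhalf i hiN
    have hshift : |u (xhalf i) - u (x i)| ≤ M * h := by
      have := abs_sub_le_of_eq_of_abs_iteratedDeriv_two_le hu (hu0.trans hu1.symm)
        (fun y hy => hM y (Ioo_subset_Icc_self hy)) (hnode i (by omega))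
        ⟨(hnode i (by omega)).1.trans hleft, hright.trans (hnode (i + 1) (by omega)).2⟩ hleft
      nlinarith [hxh i hiN]
    calc |uh i - u (xhalf i)| ≤ |uh i - u (x i)| + |u (x i) - u (xhalf i)| := abs_sub_le _ _ _
      _ ≤ C * h * M + M * h := by
        rw [abs_sub_comm (uh i), abs_sub_comm (u (x i)) (u (xhalf i))]
        exact add_le_add (hnodal i (by omega)) hshift
      _ = (C + 1) * h * M := by ring
  have hh : 0 ≤ h := (hstep 0 (Nat.succ_pos N)).le.trans (hxh 0 (Nat.zero_le N))
  calc _ ≤ √(∑ i ∈ range (N + 1), (x (i + 1) - x i)) * ((C + 1) * h * M) :=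
        sqrt_sum_mul_sq_le_sqrt_sum_mul _ (fun i hi => (hstep i (mem_range.1 hi)).le)
          hpointwise (by positivity)
    _ = (C + 1) * h * M := by rw [hlength, Real.sqrt_one, one_mul]
end

section
/- 2D discrete Poincaré inequality: let (w_{ij}) for 0 ≤ i ≤ M+1, 0 ≤ j ≤ N+1 vanish on the boundary indices, with mesh widths h_i, k_j > 0 (i = 1..M, j = 1..N) satisfying Σ h_i = Σ k_j = 1 and adjacent distances h_{i+1/2}, k_{j+1/2} > 0 with Σ_{i=0}^M h_{i+1/2} = 1. Then ‖w‖_{L²} := (Σ_{i,j} h_i k_j w_{ij}²)^{1/2} ≤ ‖w‖_{1,τ} := (Σ_{i,j} k_j (w_{i+1,j}-w_{ij})²/h_{i+1/2} + Σ_{i,j} h_i (w_{i,j+1}-w_{ij})²/k_{j+1/2})^{1/2}. -/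
/-!
Along each line `j`, `w` vanishes at `i = 0`, so `w i j` telescopes into its increments, and
Cauchy–Schwarz with weights `hhalf` gives `(w i j)² ≤ (∑ hhalf) · E j`, where `E j` is the
one-dimensional energy of the line. Averaging with the weights `hcell i * kcell j` bounds the `L²`
norm by the `i`-direction part of `‖w‖_{1,τ}²`; the `j`-direction part is nonnegative.
-/

open Finset

theorem sq_le_sum_mul_sum_sq_sub_div {u d : ℕ → ℝ} {n i : ℕ} (hu : u 0 = 0)
    (hd : ∀ p < n, 0 < d p) (hi : i ≤ n) :
    u i ^ 2 ≤ (∑ p ∈ range n, d p) * ∑ p ∈ range n, (u (p + 1) - u p) ^ 2 / d p := by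
  have hsub : range i ⊆ range n := range_subset_range.2 hi
  have hd' : ∀ p ∈ range n, 0 < d p := fun p hp => hd p (mem_range.1 hp)
  have henergy : ∀ p ∈ range n, 0 ≤ (u (p + 1) - u p) ^ 2 / d p :=
    fun p hp => div_nonneg (sq_nonneg _) (hd' p hp).le
  have htel : u i = ∑ p ∈ range i, (u (p + 1) - u p) := by rw [sum_range_sub, hu, sub_zero]
  calc u i ^ 2 = (∑ p ∈ range i, (u (p + 1) - u p)) ^ 2 := by rw [htel]
    _ ≤ (∑ p ∈ range i, d p) * ∑ p ∈ range i, (u (p + 1) - u p) ^ 2 / d p :=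
        sum_sq_le_sum_mul_sum_of_sq_le_mul _ (fun p hp => (hd' p (hsub hp)).le)
          (fun p hp => henergy p (hsub hp))
          (fun p hp => by rw [mul_div_cancel₀ _ (hd' p (hsub hp)).ne'])
    _ ≤ (∑ p ∈ range n, d p) * ∑ p ∈ range n, (u (p + 1) - u p) ^ 2 / d p :=
        mul_le_mul (sum_le_sum_of_subset_of_nonneg hsub fun p hp _ => (hd' p hp).le)
          (sum_le_sum_of_subset_of_nonneg hsub fun p hp _ => henergy p hp)
          (sum_nonneg fun p hp => henergy p (hsub hp)) (sum_nonneg fun p hp => (hd' p hp).le)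

theorem discrete_poincare_1d {u c d : ℕ → ℝ} {s : Finset ℕ} {n : ℕ} (hu : u 0 = 0)
    (hc : ∀ i ∈ s, 0 ≤ c i) (hd : ∀ p < n, 0 < d p) (hs : ∀ i ∈ s, i ≤ n) :
    ∑ i ∈ s, c i * u i ^ 2 ≤
      (∑ i ∈ s, c i) * ((∑ p ∈ range n, d p) * ∑ p ∈ range n, (u (p + 1) - u p) ^ 2 / d p) := by
  rw [sum_mul]
  gcongr with i hi
  · exact hc i hi
  · exact sq_le_sum_mul_sum_sq_sub_div hu hd (hs i hi)

theorem sum_Icc_one_eq_sum_range_succ {β : Type*} [AddCommMonoid β] {f : ℕ → β} (n : ℕ)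
    (hf : f 0 = 0) : ∑ i ∈ Icc 1 n, f i = ∑ i ∈ range (n + 1), f i :=
  sum_subset (fun i hi => mem_range.2 (by have := (mem_Icc.1 hi).2; omega)) fun i hi hi' => by
    obtain rfl : i = 0 := by simp only [mem_range, mem_Icc] at hi hi'; omega
    exact hf

theorem sum_sum_mul_mul_le {ι κ R : Type*} [CommSemiring R] [PartialOrder R] [IsOrderedRing R]
    {s : Finset ι} {t : Finset κ} {a : ι → R} {b : κ → R} {f : ι → κ → R} {g : κ → R}
    (hb : ∀ j ∈ t, 0 ≤ b j) (h : ∀ j ∈ t, ∑ i ∈ s, a i * f i j ≤ g j) :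
    ∑ i ∈ s, ∑ j ∈ t, a i * b j * f i j ≤ ∑ j ∈ t, b j * g j := by
  rw [sum_comm]
  gcongr with j hj
  calc ∑ i ∈ s, a i * b j * f i j = b j * ∑ i ∈ s, a i * f i j := by
        rw [mul_sum]; exact sum_congr rfl fun i _ => by ring
    _ ≤ b j * g j := mul_le_mul_of_nonneg_left (h j hj) (hb j hj)

theorem discrete_2d_poincare_general
    (M N : ℕ) (hcell kcell hhalf khalf : ℕ → ℝ) (w : ℕ → ℕ → ℝ)
    (hcpos : ∀ i, 1 ≤ i → i ≤ M → 0 < hcell i)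
    (kcpos : ∀ j, 1 ≤ j → j ≤ N → 0 < kcell j)
    (hhpos : ∀ i ≤ M, 0 < hhalf i)
    (khpos : ∀ j ≤ N, 0 < khalf j)
    (hsum : ∑ i ∈ Icc 1 M, hcell i = 1)
    (hhsum : ∑ i ∈ range (M + 1), hhalf i = 1)
    (hbd : ∀ i ≤ M + 1, ∀ j ≤ N + 1,
      (i = 0 ∨ i = M + 1 ∨ j = 0 ∨ j = N + 1) → w i j = 0) :
    Real.sqrt (∑ i ∈ Icc 1 M, ∑ j ∈ Icc 1 N, hcell i * kcell j * (w i j) ^ 2) ≤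
      Real.sqrt
        ((∑ i ∈ range (M + 1), ∑ j ∈ range (N + 1),
            kcell j * (w (i + 1) j - w i j) ^ 2 / hhalf i)
          + ∑ i ∈ range (M + 1), ∑ j ∈ range (N + 1),
              hcell i * (w i (j + 1) - w i j) ^ 2 / khalf j) := by
  set E : ℕ → ℝ := fun j => ∑ i ∈ range (M + 1), (w (i + 1) j - w i j) ^ 2 / hhalf i with hE
  have hrow : ∀ j ∈ Icc 1 N, ∑ i ∈ Icc 1 M, hcell i * w i j ^ 2 ≤ E j := fun j hj => by
    have hj := mem_Icc.1 hj
    simpa [hsum, hhsum] using discrete_poincare_1d (u := (w · j)) (n := M + 1)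
      (hbd 0 (by omega) j (by omega) (by omega))
      (fun i hi => (hcpos i (mem_Icc.1 hi).1 (mem_Icc.1 hi).2).le)
      (fun p hp => hhpos p (by omega)) (fun i hi => by have := (mem_Icc.1 hi).2; omega)
  have hE0 : E 0 = 0 := sum_eq_zero fun i hi => by
    have := mem_range.1 hi
    rw [hbd (i + 1) (by omega) 0 (by omega) (by omega), hbd i (by omega) 0 (by omega) (by omega)]
    simp
  have hdx : ∑ j ∈ Icc 1 N, kcell j * E j = ∑ i ∈ range (M + 1), ∑ j ∈ range (N + 1),
      kcell j * (w (i + 1) j - w i j) ^ 2 / hhalf i := by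
    rw [sum_Icc_one_eq_sum_range_succ N (by rw [hE0, mul_zero]), sum_comm]
    simp only [hE, mul_sum, mul_div_assoc]
  have hdy : 0 ≤ ∑ i ∈ range (M + 1), ∑ j ∈ range (N + 1),
      hcell i * (w i (j + 1) - w i j) ^ 2 / khalf j := by
    have hw0 : ∀ j ∈ range (N + 1), w 0 (j + 1) = 0 ∧ w 0 j = 0 := fun j hj => by
      have := mem_range.1 hj
      exact ⟨hbd 0 (by omega) (j + 1) (by omega) (by omega),
        hbd 0 (by omega) j (by omega) (by omega)⟩
    rw [← sum_Icc_one_eq_sum_range_succ M (sum_eq_zero fun j hj => by simp [hw0 j hj])]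
    refine sum_nonneg fun i hi => sum_nonneg fun j hj => ?_
    have := hcpos i (mem_Icc.1 hi).1 (mem_Icc.1 hi).2
    have := khpos j (by simp only [mem_range] at hj; omega)
    positivity
  have hL2 := sum_sum_mul_mul_le (fun j hj => (kcpos j (mem_Icc.1 hj).1 (mem_Icc.1 hj).2).le) hrow
  exact Real.sqrt_le_sqrt (by linarith)

/-- 2D discrete Poincaré inequality: `‖w‖_{L²} ≤ ‖w‖_{1,τ}`. -/
theorem discrete_2d_poincare
    (M N : ℕ) (hcell kcell hhalf khalf : ℕ → ℝ) (w : ℕ → ℕ → ℝ)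
    (hcpos : ∀ i, 1 ≤ i → i ≤ M → 0 < hcell i)
    (kcpos : ∀ j, 1 ≤ j → j ≤ N → 0 < kcell j)
    (hhpos : ∀ i ≤ M, 0 < hhalf i)
    (khpos : ∀ j ≤ N, 0 < khalf j)
    (hsum : ∑ i ∈ Icc 1 M, hcell i = 1)
    (ksum : ∑ j ∈ Icc 1 N, kcell j = 1)
    (hhsum : ∑ i ∈ range (M + 1), hhalf i = 1)
    (khsum : ∑ j ∈ range (N + 1), khalf j = 1)
    (hbd : ∀ i ≤ M + 1, ∀ j ≤ N + 1,
      (i = 0 ∨ i = M + 1 ∨ j = 0 ∨ j = N + 1) → w i j = 0) :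
    Real.sqrt (∑ i ∈ Icc 1 M, ∑ j ∈ Icc 1 N, hcell i * kcell j * (w i j) ^ 2) ≤
      Real.sqrt
        ((∑ i ∈ range (M + 1), ∑ j ∈ range (N + 1),
            kcell j * (w (i + 1) j - w i j) ^ 2 / hhalf i)
          + ∑ i ∈ range (M + 1), ∑ j ∈ range (N + 1),
              hcell i * (w i (j + 1) - w i j) ^ 2 / khalf j) :=
  discrete_2d_poincare_general M N hcell kcell hhalf khalf w hcpos kcpos hhpos khpos hsum hhsum hbd
end
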